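/- arXiv:2409.10438 — 2 statements merged into one kernel-verified Lean document; each statement's English description precedes it below -/
import Mathlib

section
/- Let A be an abelian category with enough projectives and n a positive integer. The following are equivalent: (a) every projective object of A has dominant dimension at least n+1; (b) every object of projective dimension at most m has dominant dimension at least n+1−m, for all 0 ≤ m ≤ n; (c) every object of projective dimension at most n has dominant dimension at least 1. -/
open CategoryTheory CategoryTheory.Limits

namespace Paper


variable {A : Type*} [Category A] [Abelian A]

/-- `domdim X ≥ k`: there is an exact sequence `0 → X → Y₁ → ⋯ → Y_k` with all `Y_i`
projective and injective. -/
def DomdimGE (X : A) (k : ℕ) : Prop :=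
  ∃ T : ComposableArrows A k, T.obj' 0 (by omega) = X ∧
    (∀ (i : ℕ) (hi : i ≤ k), 1 ≤ i → Projective (T.obj' i hi) ∧ Injective (T.obj' i hi)) ∧
    T.Exact ∧ ∀ (h : 1 ≤ k), Mono (T.map' 0 1 (by omega) h)

/-- `pdim X ≤ d`: there is an exact sequence `0 → P_d → ⋯ → P_0 → X → 0` with all `P_i`
projective. -/
def PdimProjLE (X : A) (d : ℕ) : Prop :=
  ∃ T : ComposableArrows A (d+1), T.obj' (d+1) (by omega) = X ∧
    (∀ (i : ℕ) (hi : i ≤ d), Projective (T.obj' i (by omega))) ∧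
    T.Exact ∧ Mono (T.map' 0 1 (by omega) (by omega)) ∧
    Epi (T.map' d (d+1) (by omega) (by omega))

/-- The first homology of the complex `Hom(P'',H) → Hom(P,H) → Hom(P',H)` obtained by
applying `Hom(-,H)` to `P' ⟶ P ⟶ P''` vanishes. -/
def ExtVanishesAt {D : Type*} [Category D] [Preadditive D] {P' P P'' : D}
    (d1 : P' ⟶ P) (d0 : P ⟶ P'') (H : D) : Prop :=
  ∀ φ : P ⟶ H, d1 ≫ φ = 0 → ∃ ψ : P'' ⟶ H, d0 ≫ ψ = φ

/-- A partial projective resolution `P_m → ⋯ → P_0 → X` (length `m+1`, exact at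
`P_{m-1},…,P_0` and with `P_0 → X` epi). -/
def IsPartialProjResolution {m : ℕ} (R : ComposableArrows A (m+1)) (X : A) : Prop :=
  R.obj' (m+1) (by omega) = X ∧ (∀ (i : ℕ) (hi : i ≤ m), Projective (R.obj' i (by omega))) ∧
  R.Exact ∧ Epi (R.map' m (m+1) (by omega) (by omega))

end Paper

/-!
Write `D k X` for `domdim X ≥ k`. Peeling off the first term of the defining sequence,
`D (k + 1) X` holds iff `X` embeds into a projective-injective `Y` with `D k (Y / X)`.
For a short exact sequence `0 → X₁ → X₂ → X₃ → 0` this gives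
* `D k X₁ → D k X₃ → D k X₂` (horseshoe: embed `X₂` into `Y₁ ⊕ Y₃`; the snake lemma makes the
  cokernels short exact again);
* `D (k + 1) X₂ → D k X₃ → D (k + 1) X₁` (embed `X₁` through `X₂`);
* `D (k + 1) X₁ → D k X₂ → D k X₃`: push the sequence out along `X₁ ↪ Y`; the pushout is an
  extension of `Y / X₁` by `X₂`, and it contains `X₃` as a complement of the injective `Y`.

(a) ⇒ (b): going down a projective resolution `0 → P_m → ⋯ → P_0 → X → 0`, the third rule
loses one at each of the `m` steps.
(c) ⇒ (a): if `X ↪ Y` with `Y` projective-injective, then `pdim (Y / X) ≤ pdim X + 1`; so by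
induction on `j`, every `X` with `pdim X ≤ n - j` has `D (j + 1) X`.
-/

namespace CategoryTheory.ShortComplex

variable {A : Type*} [Category A] [Abelian A]

lemma exact_mk_epi_comp_iff {W X Y Z : A} (e : W ⟶ X) [Epi e] {α : X ⟶ Y} {β : Y ⟶ Z}
    (w : α ≫ β = 0) :
    (mk (e ≫ α) β (by rw [Category.assoc, w, comp_zero])).Exact ↔ (mk α β w).Exact :=
  exact_iff_of_epi_of_isIso_of_mono { τ₁ := e, τ₂ := 𝟙 _, τ₃ := 𝟙 _ }

lemma exact_mk_comp_mono_iff {X Y Z Z' : A} {α : X ⟶ Y} {β : Y ⟶ Z} (w : α ≫ β = 0)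
    (m : Z ⟶ Z') [Mono m] :
    (mk α (β ≫ m) (by rw [reassoc_of% w, zero_comp])).Exact ↔ (mk α β w).Exact :=
  (exact_iff_of_epi_of_isIso_of_mono (S₁ := mk α β w)
    (S₂ := mk α (β ≫ m) (by rw [reassoc_of% w, zero_comp])) { τ₁ := 𝟙 _, τ₂ := 𝟙 _, τ₃ := m }).symm

lemma exact_cokernel_π_comp_eqToHom {X Y C : A} (f : X ⟶ Y) (h : cokernel f = C) :
    (mk f (cokernel.π f ≫ eqToHom h) (by simp)).Exact :=
  (exact_mk_comp_mono_iff _ _).2 (exact_cokernel f)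

lemma shortExact_cokernel {X Y : A} (f : X ⟶ Y) [Mono f] :
    (mk f (cokernel.π f) (cokernel.condition f)).ShortExact :=
  { exact := exact_cokernel f }

lemma Splitting.shortExact_s_r {S : ShortComplex A} (s : S.Splitting) :
    (ShortComplex.mk s.s s.r s.s_r).ShortExact :=
  Splitting.shortExact
    { r := S.g, s := S.f, f_r := s.s_g, s_g := s.f_r, id := by rw [add_comm]; exact s.id }

lemma shortExact_cokernelComp {X Y Z : A} (f : X ⟶ Y) (g : Y ⟶ Z) [Mono g] :
    (mk (cokernel.map f (f ≫ g) (𝟙 _) g (by simp))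
      (cokernel.map (f ≫ g) g f (𝟙 _) (by simp)) (by ext; simp)).ShortExact := by
  have hE := kernelCokernelCompSequence_exact f g
  refine { exact := hE.exact 3, mono_f := ?_, epi_g := ?_ }
  · exact (hE.exact 2).mono_g ((isZero_kernel_of_mono g).eq_of_src _ _)
  · exact epi_of_epi_fac (cokernel.π_desc _ _ _)

variable {S₁ S₂ : ShortComplex A} (φ : S₁ ⟶ S₂)

noncomputable def kernelRow : ShortComplex A :=
  mk (kernel.map φ.τ₁ φ.τ₂ S₁.f S₂.f φ.comm₁₂) (kernel.map φ.τ₂ φ.τ₃ S₁.g S₂.g φ.comm₂₃)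
    (by ext; simp)

noncomputable def cokernelRow : ShortComplex A :=
  mk (cokernel.map φ.τ₁ φ.τ₂ S₁.f S₂.f φ.comm₁₂) (cokernel.map φ.τ₂ φ.τ₃ S₁.g S₂.g φ.comm₂₃)
    (by ext; simp)

noncomputable def snakeInputOfHom (h₁ : S₁.ShortExact) (h₂ : S₂.ShortExact) : SnakeInput A where
  L₀ := kernelRow φ
  L₁ := S₁
  L₂ := S₂
  L₃ := cokernelRow φ
  v₀₁ := { τ₁ := kernel.ι φ.τ₁, τ₂ := kernel.ι φ.τ₂, τ₃ := kernel.ι φ.τ₃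
           comm₁₂ := by simp [kernelRow], comm₂₃ := by simp [kernelRow] }
  v₁₂ := φ
  v₂₃ := { τ₁ := cokernel.π φ.τ₁, τ₂ := cokernel.π φ.τ₂, τ₃ := cokernel.π φ.τ₃
           comm₁₂ := by simp [cokernelRow], comm₂₃ := by simp [cokernelRow] }
  w₀₂ := by ext <;> exact kernel.condition _
  w₁₃ := by ext <;> exact cokernel.condition _
  h₀ := by
    apply isLimitOfIsLimitπ <;>
      exact (KernelFork.isLimitMapConeEquiv _ _).2 (kernelIsKernel _)
  h₃ := by
    apply isColimitOfIsColimitπ <;>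
      exact (CokernelCofork.isColimitMapCoconeEquiv _ _).2 (cokernelIsCokernel _)
  L₁_exact := h₁.exact
  epi_L₁_g := h₁.epi_g
  L₂_exact := h₂.exact
  mono_L₂_f := h₂.mono_f

lemma shortExact_cokernelRow (h₁ : S₁.ShortExact) (h₂ : S₂.ShortExact) [Mono φ.τ₃] :
    (cokernelRow φ).ShortExact where
  exact := (snakeInputOfHom φ h₁ h₂).L₃_exact
  mono_f := (snakeInputOfHom φ h₁ h₂).L₂'_exact.mono_g
    ((isZero_kernel_of_mono φ.τ₃).eq_of_src _ _)
  epi_g := by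
    have := h₂.epi_g
    dsimp only [cokernelRow]
    exact epi_of_epi_fac (cokernel.π_desc _ _ _)

end CategoryTheory.ShortComplex

namespace CategoryTheory.ComposableArrows

variable {A : Type*} [Category A] {n : ℕ}

/-- `X ⟶ Y ⟶ S₁ ⟶ ⋯ ⟶ Sₙ₊₁`, where `Y ⟶ S₁` is the composition `Y ⟶ S₀ ⟶ S₁`. -/
def consThrough {X Y : A} (f : X ⟶ Y) (S : ComposableArrows A (n + 1)) (p : Y ⟶ S.left) :
    ComposableArrows A (n + 2) :=
  (S.δ₀.precomp (p ≫ S.map' 0 1)).precomp f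

lemma epi_consThrough_map_last {S : ComposableArrows A (n + 1)} [h : Epi (S.map' n (n + 1))]
    {X Y : A} (f : X ⟶ Y) (p : Y ⟶ S.left) [Epi p] :
    Epi ((S.consThrough f p).map' (n + 1) (n + 2)) := by
  cases n with
  | zero => exact @epi_comp _ _ _ _ _ p _ _ h
  | succ n => exact h

variable [Abelian A]

lemma Exact.δ₀_precomp_epi_comp {S : ComposableArrows A (n + 2)} (hS : S.Exact) {Y : A}
    (p : Y ⟶ S.left) [Epi p] : (S.δ₀.precomp (p ≫ S.map' 0 1)).Exact :=
  exact_of_δ₀ ((ShortComplex.exact_mk_epi_comp_iff p (hS.toIsComplex.zero 0)).2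
    (hS.exact 0)).exact_toComposableArrows hS.δ₀

lemma Exact.consThrough {S : ComposableArrows A (n + 1)} (hS : S.Exact) [Mono (S.map' 0 1)]
    {X Y : A} {f : X ⟶ Y} {p : Y ⟶ S.left} [Epi p] {w : f ≫ p = 0}
    (hfp : (ShortComplex.mk f p w).Exact) : (S.consThrough f p).Exact := by
  have hf : (ShortComplex.mk f (p ≫ S.map' 0 1) (by rw [reassoc_of% w, zero_comp])).Exact :=
    (ShortComplex.exact_mk_comp_mono_iff w _).2 hfp
  refine exact_of_δ₀ hf.exact_toComposableArrows ?_
  cases n with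
  | zero => exact exact₁ _
  | succ n => exact hS.δ₀_precomp_epi_comp p

/-- `coker (X₀ ⟶ X₁) ⟶ X₂ ⟶ ⋯ ⟶ Xₙ₊₂`. -/
noncomputable def cokernelFirst (T : ComposableArrows A (n + 2))
    (w : T.map' 0 1 ≫ T.map' 1 2 = 0) : ComposableArrows A (n + 1) :=
  T.δ₀.δ₀.precomp (cokernel.desc _ _ w)

variable {T : ComposableArrows A (n + 2)}

lemma Exact.mono_cokernelFirst_map (hT : T.Exact) :
    Mono ((T.cokernelFirst (hT.toIsComplex.zero 0)).map' 0 1) :=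
  (hT.exact 0).mono_cokernelDesc

lemma Exact.cokernelFirst (hT : T.Exact) : (T.cokernelFirst (hT.toIsComplex.zero 0)).Exact := by
  cases n with
  | zero => exact exact₁ _
  | succ n =>
    have w : cokernel.desc _ _ (hT.toIsComplex.zero 0) ≫ T.map' 2 3 = 0 :=
      (cancel_epi (cokernel.π _)).1
        (by rw [cokernel.π_desc_assoc, comp_zero]; exact hT.toIsComplex.zero 1)
    have hd := (ShortComplex.exact_mk_epi_comp_iff (cokernel.π _) w).1
      (by simpa only [cokernel.π_desc] using hT.exact 1)
    exact exact_of_δ₀ hd.exact_toComposableArrows hT.δ₀.δ₀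

lemma epi_cokernelFirst_map_last (w : T.map' 0 1 ≫ T.map' 1 2 = 0)
    [h : Epi (T.map' (n + 1) (n + 2))] : Epi ((T.cokernelFirst w).map' n (n + 1)) := by
  cases n with
  | zero => exact @epi_of_epi_fac _ _ _ _ _ _ _ _ h (cokernel.π_desc _ _ w)
  | succ n => exact h

end CategoryTheory.ComposableArrows

namespace Paper

open ComposableArrows

variable {A : Type*} [Category A] [Abelian A]

lemma domdimGE_zero (X : A) : DomdimGE X 0 :=
  ⟨mk₀ X, rfl, fun _ _ _ => by omega, exact₀ _, fun _ => by omega⟩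

lemma domdimGE_succ_iff {X : A} {k : ℕ} :
    DomdimGE X (k + 1) ↔ ∃ (Y : A) (f : X ⟶ Y), Mono f ∧ Projective Y ∧ Injective Y ∧
      DomdimGE (cokernel f) k := by
  constructor
  · rintro ⟨T, rfl, hT, hex, hmono⟩
    refine ⟨T.obj' 1, T.map' 0 1, hmono (by omega), (hT 1 (by omega) le_rfl).1,
      (hT 1 (by omega) le_rfl).2, ?_⟩
    cases k with
    | zero => exact domdimGE_zero _
    | succ k =>
      refine ⟨T.cokernelFirst (hex.toIsComplex.zero 0), rfl, ?_, hex.cokernelFirst,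
        fun _ => hex.mono_cokernelFirst_map⟩
      rintro (_ | i) hi h1
      · omega
      · exact hT (i + 2) (by omega) (by omega)
  · rintro ⟨Y, f, hf, hP, hI, hD⟩
    cases k with
    | zero =>
      refine ⟨mk₁ f, rfl, ?_, exact₁ _, fun _ => hf⟩
      rintro (_ | _ | i) hi h1
      · omega
      · exact ⟨hP, hI⟩
      · omega
    | succ k =>
      obtain ⟨S, h0, hS, hex, hmono⟩ := hD
      have := hmono (by omega)
      refine ⟨S.consThrough f (cokernel.π f ≫ eqToHom h0.symm), rfl, ?_,
        hex.consThrough (ShortComplex.exact_cokernel_π_comp_eqToHom f h0.symm), fun _ => hf⟩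
      rintro (_ | _ | i) hi h1
      · omega
      · exact ⟨hP, hI⟩
      · exact hS (i + 1) (by omega) (by omega)

lemma DomdimGE.of_iso : ∀ {k : ℕ} {X X' : A}, (X ≅ X') → DomdimGE X k → DomdimGE X' k
  | 0, _, _, _, _ => domdimGE_zero _
  | k + 1, _, _, e, h => by
    obtain ⟨Y, f, hf, hP, hI, hD⟩ := domdimGE_succ_iff.1 h
    exact domdimGE_succ_iff.2 ⟨Y, e.inv ≫ f, mono_comp _ _, hP, hI,
      hD.of_iso (cokernelEpiComp e.inv f).symm⟩

lemma DomdimGE.of_le : ∀ {k j : ℕ} {X : A}, DomdimGE X k → j ≤ k → DomdimGE X j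
  | _, 0, _, _, _ => domdimGE_zero _
  | 0, _ + 1, _, _, h => by omega
  | _ + 1, _ + 1, _, hX, h => by
    obtain ⟨Y, f, hf, hP, hI, hD⟩ := domdimGE_succ_iff.1 hX
    exact domdimGE_succ_iff.2 ⟨Y, f, hf, hP, hI, hD.of_le (by omega)⟩

lemma domdimGE_of_isZero {Z : A} (hZ : IsZero Z) : ∀ k, DomdimGE Z k
  | 0 => domdimGE_zero _
  | k + 1 => domdimGE_succ_iff.2 ⟨Z, 𝟙 Z, inferInstance, hZ.projective, hZ.injective,
      domdimGE_of_isZero (isZero_cokernel_of_epi _) k⟩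

lemma domdimGE_of_projective_injective {Y : A} (hP : Projective Y) (hI : Injective Y) :
    ∀ k, DomdimGE Y k
  | 0 => domdimGE_zero _
  | k + 1 => domdimGE_succ_iff.2 ⟨Y, 𝟙 Y, inferInstance, hP, hI,
      domdimGE_of_isZero (isZero_cokernel_of_epi _) k⟩

end Paper

namespace CategoryTheory.ShortComplex.ShortExact

open Paper

variable {A : Type*} [Category A] [Abelian A] {S : ShortComplex A} {k : ℕ}

lemma domdimGE_X₂ (hS : S.ShortExact) (h₁ : DomdimGE S.X₁ k) (h₃ : DomdimGE S.X₃ k) :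
    DomdimGE S.X₂ k := by
  induction k generalizing S with
  | zero => exact domdimGE_zero _
  | succ k ih =>
    obtain ⟨Y₁, a, ha, hP₁, hI₁, hD₁⟩ := domdimGE_succ_iff.1 h₁
    obtain ⟨Y₃, b, hb, hP₃, hI₃, hD₃⟩ := domdimGE_succ_iff.1 h₃
    have := hS.mono_f
    let φ : S ⟶ ShortComplex.mk (biprod.inl : Y₁ ⟶ Y₁ ⊞ Y₃) biprod.snd (by simp) :=
      { τ₁ := a
        τ₂ := biprod.lift (Injective.factorThru a S.f) (S.g ≫ b)
        τ₃ := b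
        comm₁₂ := by ext <;> simp
        comm₂₃ := by simp }
    have hφ : Mono φ.τ₂ := mono_τ₂_of_exact_of_mono φ hS.exact
    exact domdimGE_succ_iff.2 ⟨_, φ.τ₂, hφ, inferInstance, inferInstance,
      ih (shortExact_cokernelRow φ hS (Splitting.ofHasBinaryBiproduct Y₁ Y₃).shortExact) hD₁ hD₃⟩

lemma domdimGE_X₁ (hS : S.ShortExact) (h₂ : DomdimGE S.X₂ (k + 1)) (h₃ : DomdimGE S.X₃ k) :
    DomdimGE S.X₁ (k + 1) := by
  obtain ⟨V, v, hv, hP, hI, hD⟩ := domdimGE_succ_iff.1 h₂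
  have := hS.mono_f
  have e : cokernel S.f ≅ S.X₃ :=
    IsColimit.coconePointUniqueUpToIso (cokernelIsCokernel S.f) hS.gIsCokernel
  exact domdimGE_succ_iff.2 ⟨V, S.f ≫ v, mono_comp _ _, hP, hI,
    (shortExact_cokernelComp S.f v).domdimGE_X₂ (h₃.of_iso e.symm) hD⟩

lemma domdimGE_X₃ (hS : S.ShortExact) (h₁ : DomdimGE S.X₁ (k + 1)) (h₂ : DomdimGE S.X₂ k) :
    DomdimGE S.X₃ k := by
  obtain ⟨Y, a, ha, hP, hI, hD⟩ := domdimGE_succ_iff.1 h₁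
  have := hS.mono_f
  have sq := IsPushout.of_hasPushout S.f a
  have := isIso_cokernel_map_of_isPushout sq
  have := isIso_cokernel_map_of_isPushout sq.flip
  have hE : DomdimGE (pushout S.f a) k :=
    (shortExact_cokernel (pushout.inl S.f a)).domdimGE_X₂ h₂
      (hD.of_iso (asIso (cokernel.map _ _ _ _ sq.flip.w)))
  have hC : DomdimGE (cokernel (pushout.inr S.f a)) k := by
    cases k with
    | zero => exact domdimGE_zero _
    | succ k =>
      exact (shortExact_cokernel (pushout.inr S.f a)).splittingOfInjective.shortExact_s_r
        |>.domdimGE_X₁ hE (domdimGE_of_projective_injective hP hI k)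
  exact hC.of_iso ((asIso (cokernel.map _ _ _ _ sq.w)).symm ≪≫
    IsColimit.coconePointUniqueUpToIso (cokernelIsCokernel S.f) hS.gIsCokernel)

end CategoryTheory.ShortComplex.ShortExact

namespace Paper

open ComposableArrows

variable {A : Type*} [Category A] [Abelian A]

/-- An exact sequence `0 → B → P_d → ⋯ → P_1 → X → 0` with all `P_i` projective. -/
def IsSyzygy (d : ℕ) (B X : A) : Prop :=
  ∃ T : ComposableArrows A (d + 1), T.obj' 0 = B ∧ T.obj' (d + 1) = X ∧
    (∀ (i : ℕ) (hi : i ≤ d), 1 ≤ i → Projective (T.obj' i)) ∧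
    T.Exact ∧ Mono (T.map' 0 1) ∧ Epi (T.map' d (d + 1))

lemma isSyzygy_zero_iff {B X : A} : IsSyzygy 0 B X ↔ Nonempty (B ≅ X) := by
  constructor
  · rintro ⟨T, rfl, rfl, -, -, hmono, hepi⟩
    exact ⟨@asIso _ _ _ _ _ (@isIso_of_mono_of_epi _ _ _ _ _ _ hmono hepi)⟩
  · rintro ⟨e⟩
    exact ⟨mk₁ e.hom, rfl, rfl, fun _ _ _ => by omega, exact₁ _,
      (inferInstance : Mono e.hom), (inferInstance : Epi e.hom)⟩

lemma isSyzygy_succ_iff {d : ℕ} {B X : A} :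
    IsSyzygy (d + 1) B X ↔ ∃ (P : A) (f : B ⟶ P), Mono f ∧ Projective P ∧
      IsSyzygy d (cokernel f) X := by
  constructor
  · rintro ⟨T, rfl, rfl, hP, hT, hmono, hepi⟩
    refine ⟨T.obj' 1, T.map' 0 1, hmono, hP 1 (by omega) le_rfl,
      T.cokernelFirst (hT.toIsComplex.zero 0), rfl, rfl, ?_, hT.cokernelFirst,
      hT.mono_cokernelFirst_map, epi_cokernelFirst_map_last _⟩
    rintro (_ | i) hi h1
    · omega
    · exact hP (i + 2) (by omega) (by omega)
  · rintro ⟨P, f, hf, hP, S, h0, rfl, hS, hex, hmono, hepi⟩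
    refine ⟨S.consThrough f (cokernel.π f ≫ eqToHom h0.symm), rfl, rfl, ?_,
      hex.consThrough (ShortComplex.exact_cokernel_π_comp_eqToHom f h0.symm), hf,
      epi_consThrough_map_last _ _⟩
    rintro (_ | _ | i) hi h1
    · omega
    · exact hP
    · exact hS (i + 1) (by omega) (by omega)

lemma IsSyzygy.succ {d : ℕ} {B : A} {S : ShortComplex A} (hS : S.ShortExact)
    (hP : Projective S.X₂) (h : IsSyzygy d B S.X₁) : IsSyzygy (d + 1) B S.X₃ := by
  induction d generalizing B with
  | zero =>
    obtain ⟨e⟩ := isSyzygy_zero_iff.1 h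
    have := hS.mono_f
    exact isSyzygy_succ_iff.2 ⟨S.X₂, e.hom ≫ S.f, mono_comp _ _, hP, isSyzygy_zero_iff.2
      ⟨cokernelEpiComp e.hom S.f ≪≫
        IsColimit.coconePointUniqueUpToIso (cokernelIsCokernel S.f) hS.gIsCokernel⟩⟩
  | succ d ih =>
    obtain ⟨P, f, hf, hP', h'⟩ := isSyzygy_succ_iff.1 h
    exact isSyzygy_succ_iff.2 ⟨P, f, hf, hP', ih h'⟩

lemma IsSyzygy.domdimGE {m k : ℕ} {B X : A} (h : IsSyzygy m B X)
    (hP : ∀ P : A, Projective P → DomdimGE P (k + m)) (hB : DomdimGE B (k + m)) :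
    DomdimGE X k := by
  induction m generalizing B with
  | zero =>
    obtain ⟨e⟩ := isSyzygy_zero_iff.1 h
    exact hB.of_iso e
  | succ m ih =>
    obtain ⟨P, f, hf, hPP, h'⟩ := isSyzygy_succ_iff.1 h
    exact ih h' (fun Q hQ => (hP Q hQ).of_le (by omega))
      ((ShortComplex.shortExact_cokernel f).domdimGE_X₃ hB ((hP P hPP).of_le (by omega)))

lemma pdimProjLE_iff {X : A} {d : ℕ} :
    PdimProjLE X d ↔ ∃ B, Projective B ∧ IsSyzygy d B X := by
  constructor
  · rintro ⟨T, hX, hP, hT, hmono, hepi⟩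
    exact ⟨_, hP 0 (by omega), T, rfl, hX, fun i hi _ => hP i hi, hT, hmono, hepi⟩
  · rintro ⟨B, hB, T, rfl, hX, hP, hT, hmono, hepi⟩
    refine ⟨T, hX, ?_, hT, hmono, hepi⟩
    rintro (_ | i) hi
    · exact hB
    · exact hP (i + 1) hi (by omega)

lemma pdimProjLE_zero_of_projective {P : A} (hP : Projective P) : PdimProjLE P 0 :=
  pdimProjLE_iff.2 ⟨P, hP, isSyzygy_zero_iff.2 ⟨Iso.refl P⟩⟩

open ZeroObject in
lemma PdimProjLE.succ {X : A} {d : ℕ} (h : PdimProjLE X d) : PdimProjLE X (d + 1) := by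
  obtain ⟨T, hX, hP, hT, hmono, hepi⟩ := h
  have hzero : Mono (0 : (0 : A) ⟶ T.left) := mono_of_source_iso_zero _ (Iso.refl 0)
  refine ⟨T.precomp (0 : (0 : A) ⟶ T.left), hX, ?_, exact_of_δ₀ ?_ hT, hzero, hepi⟩
  · rintro (_ | i) hi
    · exact inferInstanceAs (Projective (0 : A))
    · exact hP i (by omega)
  · exact ((ShortComplex.exact_iff_mono (ShortComplex.mk (0 : (0 : A) ⟶ T.left) (T.map' 0 1)
      zero_comp) rfl).2 hmono).exact_toComposableArrows

lemma PdimProjLE.of_le {X : A} {m n : ℕ} (h : PdimProjLE X m) (hmn : m ≤ n) :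
    PdimProjLE X n := by
  induction n, hmn using Nat.le_induction with
  | base => exact h
  | succ n _ ih => exact ih.succ

lemma PdimProjLE.cokernel {X Y : A} {m : ℕ} (h : PdimProjLE X m) (x : X ⟶ Y) [Mono x]
    (hY : Projective Y) : PdimProjLE (cokernel x) (m + 1) := by
  obtain ⟨B, hB, hBX⟩ := pdimProjLE_iff.1 h
  exact pdimProjLE_iff.2 ⟨B, hB, IsSyzygy.succ (ShortComplex.shortExact_cokernel x) hY hBX⟩

lemma PdimProjLE.domdimGE {n m : ℕ} {X : A} (h : PdimProjLE X m) (hmn : m ≤ n)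
    (hP : ∀ P : A, Projective P → DomdimGE P (n + 1)) : DomdimGE X (n + 1 - m) := by
  obtain ⟨B, hB, hBX⟩ := pdimProjLE_iff.1 h
  rw [← Nat.sub_add_cancel (show m ≤ n + 1 by omega)] at hP
  exact hBX.domdimGE hP (hP B hB)

lemma PdimProjLE.domdimGE_succ {n : ℕ} (hc : ∀ X : A, PdimProjLE X n → DomdimGE X 1)
    {j m : ℕ} {X : A} (hX : PdimProjLE X m) (hmn : m + j ≤ n) : DomdimGE X (j + 1) := by
  induction j generalizing m X with
  | zero => exact hc X (hX.of_le (by omega))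
  | succ j ih =>
    obtain ⟨Y, x, hx, hP, hI, -⟩ := domdimGE_succ_iff.1 (ih hX (by omega))
    exact domdimGE_succ_iff.2 ⟨Y, x, hx, hP, hI, ih (hX.cokernel x hP) (by omega)⟩

end Paper

open Paper

theorem stmt_4_general {A : Type*} [Category A] [Abelian A]
    (n : ℕ) :
    ((∀ P : A, Projective P → DomdimGE P (n + 1)) ↔
      (∀ m : ℕ, m ≤ n → ∀ X : A, PdimProjLE X m → DomdimGE X (n + 1 - m))) ∧
    ((∀ P : A, Projective P → DomdimGE P (n + 1)) ↔
      (∀ X : A, PdimProjLE X n → DomdimGE X 1)) := by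
  have hab (ha : ∀ P : A, Projective P → DomdimGE P (n + 1)) (m : ℕ) (hm : m ≤ n) (X : A)
      (hX : PdimProjLE X m) : DomdimGE X (n + 1 - m) :=
    hX.domdimGE hm ha
  refine ⟨⟨hab, fun hb P hP => ?_⟩, ⟨fun ha X hX => ?_, fun hc P hP => ?_⟩⟩
  · simpa using hb 0 n.zero_le P (pdimProjLE_zero_of_projective hP)
  · simpa using hab ha n le_rfl X hX
  · exact PdimProjLE.domdimGE_succ hc (pdimProjLE_zero_of_projective hP) (by omega)

/-- In an abelian category with enough projectives, the following are equivalent for a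
positive integer `n`: (a) every projective object has dominant dimension `≥ n + 1`;
(b) every object of projective dimension `≤ m` has dominant dimension `≥ n + 1 - m`,
for all `0 ≤ m ≤ n`; (c) every object of projective dimension `≤ n` has dominant
dimension `≥ 1`. -/
theorem stmt_4 {A : Type*} [Category A] [Abelian A] [EnoughProjectives A]
    (n : ℕ) (hn : 1 ≤ n) :
    ((∀ P : A, Projective P → DomdimGE P (n + 1)) ↔
      (∀ m : ℕ, m ≤ n → ∀ X : A, PdimProjLE X m → DomdimGE X (n + 1 - m))) ∧
    ((∀ P : A, Projective P → DomdimGE P (n + 1)) ↔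
      (∀ X : A, PdimProjLE X n → DomdimGE X 1)) :=
  stmt_4_general n
end

section
/- An additive idempotent complete category C has weak kernels if and only if the category of finitely presented contravariant additive functors from C to abelian groups is abelian. -/
open CategoryTheory CategoryTheory.Limits Opposite

namespace Paper


variable {C : Type*} [Category C] [Preadditive C]

/-- Exactness of the sequence of contravariant representable functors at interior position `i`. -/
def YExactAt {m : ℕ} (T : ComposableArrows C m) (i : ℕ) (h : i + 2 ≤ m) : Prop :=
  T.map' i (i+1) (by omega) (by omega) ≫ T.map' (i+1) (i+2) (by omega) h = 0 ∧
  ∀ (W : C) (u : W ⟶ T.obj' (i+1) (by omega)),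
    u ≫ T.map' (i+1) (i+2) (by omega) h = 0 →
      ∃ v : W ⟶ T.obj' i (by omega), v ≫ T.map' i (i+1) (by omega) (by omega) = u

/-- Exactness of the sequence of covariant representable functors at interior position `i`. -/
def CoYExactAt {m : ℕ} (T : ComposableArrows C m) (i : ℕ) (h : i + 2 ≤ m) : Prop :=
  T.map' i (i+1) (by omega) (by omega) ≫ T.map' (i+1) (i+2) (by omega) h = 0 ∧
  ∀ (W : C) (u : T.obj' (i+1) (by omega) ⟶ W),
    T.map' i (i+1) (by omega) (by omega) ≫ u = 0 →
      ∃ v : T.obj' (i+2) h ⟶ W, T.map' (i+1) (i+2) (by omega) h ≫ v = u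

/-- `T = [X_n → ⋯ → X_1 → X → Y]` is such that `X_n → ⋯ → X` is an `n`-kernel of the
last map `X ⟶ Y`, i.e. `0 → C(-,X_n) → ⋯ → C(-,X) → C(-,Y)` is exact. -/
def IsNKernelSeq (n : ℕ) (T : ComposableArrows C (n+1)) : Prop :=
  Mono (T.map' 0 1 (by omega) (by omega)) ∧ ∀ (i : ℕ) (h : i + 2 ≤ n + 1), YExactAt T i h

/-- `T = [X → Y → Y_1 → ⋯ → Y_n]` is such that `Y → ⋯ → Y_n` is an `n`-cokernel of the
first map `X ⟶ Y`, i.e. `0 → C(Y_n,-) → ⋯ → C(Y,-) → C(X,-)` is exact. -/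
def IsNCokernelSeq (n : ℕ) (T : ComposableArrows C (n+1)) : Prop :=
  Epi (T.map' n (n+1) (by omega) (by omega)) ∧ ∀ (i : ℕ) (h : i + 2 ≤ n + 1), CoYExactAt T i h

/-- `T` is an `n`-exact sequence. -/
def IsNExactSeq (n : ℕ) (T : ComposableArrows C (n+1)) : Prop :=
  IsNKernelSeq n T ∧ IsNCokernelSeq n T

/-- The category `C` has `n`-kernels. -/
def HasNKernels (C : Type*) [Category C] [Preadditive C] (n : ℕ) : Prop :=
  ∀ ⦃X Y : C⦄ (f : X ⟶ Y), ∃ (T : ComposableArrows C (n+1))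
    (hX : T.obj' n (by omega) = X) (hY : T.obj' (n+1) (by omega) = Y),
      T.map' n (n+1) (by omega) (by omega) = eqToHom hX ≫ f ≫ eqToHom hY.symm ∧
      IsNKernelSeq n T

/-- The category `C` has `n`-cokernels. -/
def HasNCokernels (C : Type*) [Category C] [Preadditive C] (n : ℕ) : Prop :=
  ∀ ⦃X Y : C⦄ (f : X ⟶ Y), ∃ (T : ComposableArrows C (n+1))
    (hX : T.obj' 0 (by omega) = X) (hY : T.obj' 1 (by omega) = Y),
      T.map' 0 1 (by omega) (by omega) = eqToHom hX ≫ f ≫ eqToHom hY.symm ∧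
      IsNCokernelSeq n T

/-- Axiom (A2): every monomorphism, together with any of its `n`-cokernels, forms an
`n`-exact sequence. -/
def AxiomA2 (C : Type*) [Category C] [Preadditive C] (n : ℕ) : Prop :=
  ∀ (T : ComposableArrows C (n+1)), Mono (T.map' 0 1 (by omega) (by omega)) →
    IsNCokernelSeq n T → IsNExactSeq n T

/-- Axiom (A2ᵒᵖ): every epimorphism, together with any of its `n`-kernels, forms an
`n`-exact sequence. -/
def AxiomA2op (C : Type*) [Category C] [Preadditive C] (n : ℕ) : Prop :=
  ∀ (T : ComposableArrows C (n+1)), Epi (T.map' n (n+1) (by omega) (by omega)) →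
    IsNKernelSeq n T → IsNExactSeq n T

/-- Jasso's axioms for an `n`-abelian category. -/
def IsNAbelian (C : Type*) [Category C] [Preadditive C] (n : ℕ) : Prop :=
  HasNKernels C n ∧ HasNCokernels C n ∧ AxiomA2 C n ∧ AxiomA2op C n

/-- `C` has weak kernels. -/
def HasWeakKernelsP (C : Type*) [Category C] [Preadditive C] : Prop :=
  ∀ ⦃Y Z : C⦄ (g : Y ⟶ Z), ∃ (X : C) (f : X ⟶ Y), f ≫ g = 0 ∧
    ∀ ⦃W : C⦄ (u : W ⟶ Y), u ≫ g = 0 → ∃ v : W ⟶ X, v ≫ f = u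

/-- `C` has weak cokernels. -/
def HasWeakCokernelsP (C : Type*) [Category C] [Preadditive C] : Prop :=
  ∀ ⦃X Y : C⦄ (f : X ⟶ Y), ∃ (Z : C) (g : Y ⟶ Z), f ≫ g = 0 ∧
    ∀ ⦃W : C⦄ (u : Y ⟶ W), f ≫ u = 0 → ∃ v : Z ⟶ W, g ≫ v = u

/-- A category is von Neumann regular if every morphism factors as a split epimorphism
followed by a split monomorphism. -/
def VonNeumannRegular (C : Type*) [Category C] : Prop :=
  ∀ ⦃X Y : C⦄ (f : X ⟶ Y), ∃ (W : C) (p : X ⟶ W) (j : W ⟶ Y),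
    IsSplitEpi p ∧ IsSplitMono j ∧ p ≫ j = f


universe u

variable (C : Type u) [Category.{u} C] [Preadditive C]

/-- The ambient category of contravariant additive-group-valued functors on `C`,
in which `mod C` lives. -/
abbrev AmbC := Cᵒᵖ ⥤ AddCommGrpCat.{u}

/-- The ambient category of covariant additive-group-valued functors on `C`,
in which `mod Cᵒᵖ` lives. -/
abbrev AmbOp := C ⥤ AddCommGrpCat.{u}

variable {C}

/-- `p : B ⟶ Q` is a cokernel of `d : A ⟶ B` (universal property). -/
def IsCokernelπ {D : Type*} [Category D] [Limits.HasZeroMorphisms D]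
    {A B Q : D} (d : A ⟶ B) (p : B ⟶ Q) : Prop :=
  d ≫ p = 0 ∧ ∀ ⦃T : D⦄ (q : B ⟶ T), d ≫ q = 0 → ∃! t : Q ⟶ T, p ≫ t = q

/-- A contravariant functor is finitely presented if it is a cokernel of a morphism
between representable functors. -/
def IsFinitelyPresented (F : AmbC C) : Prop :=
  ∃ (X Y : C) (f : X ⟶ Y) (p : preadditiveYoneda.obj Y ⟶ F),
    IsCokernelπ (preadditiveYoneda.map f) p

/-- A covariant functor is finitely presented if it is a cokernel of a morphism
between corepresentable functors. -/
def IsFinitelyPresentedOp (G : AmbOp C) : Prop :=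
  ∃ (X Y : C) (f : X ⟶ Y) (q : preadditiveCoyoneda.obj (op X) ⟶ G),
    IsCokernelπ (preadditiveCoyoneda.map f.op) q

variable (C)

/-- The category `mod C` of finitely presented contravariant functors. -/
def ModC := ObjectProperty.FullSubcategory (IsFinitelyPresented (C := C))

instance : Category (ModC C) := ObjectProperty.FullSubcategory.category _

/-- The category `mod Cᵒᵖ` of finitely presented covariant functors. -/
def ModOp := ObjectProperty.FullSubcategory (IsFinitelyPresentedOp (C := C))

instance : Category (ModOp C) := ObjectProperty.FullSubcategory.category _

variable {C}

/-- A finitely generated projective object of `mod C`: a direct summand of a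
representable functor. -/
def IsFGProj (P : AmbC C) : Prop :=
  ∃ (X : C) (s : P ⟶ preadditiveYoneda.obj X) (r : preadditiveYoneda.obj X ⟶ P),
    s ≫ r = 𝟙 P

/-- A finitely generated projective object of `mod Cᵒᵖ`: a direct summand of a
corepresentable functor. -/
def IsFGProjOp (P : AmbOp C) : Prop :=
  ∃ (X : C) (s : P ⟶ preadditiveCoyoneda.obj (op X))
    (r : preadditiveCoyoneda.obj (op X) ⟶ P), s ≫ r = 𝟙 P

/-- `pdim F ≤ d` in `mod C`: there is an exact sequence
`0 → P_d → ⋯ → P_0 → F → 0` with all `P_i` finitely generated projective. -/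
def PdimLE (F : AmbC C) (d : ℕ) : Prop :=
  ∃ T : ComposableArrows (AmbC C) (d+1), T.obj' (d+1) (by omega) = F ∧
    (∀ (i : ℕ) (hi : i ≤ d), IsFGProj (T.obj' i (by omega))) ∧
    T.Exact ∧ Mono (T.map' 0 1 (by omega) (by omega)) ∧
    Epi (T.map' d (d+1) (by omega) (by omega))

/-- `pdim G ≤ d` in `mod Cᵒᵖ`. -/
def PdimOpLE (G : AmbOp C) (d : ℕ) : Prop :=
  ∃ T : ComposableArrows (AmbOp C) (d+1), T.obj' (d+1) (by omega) = G ∧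
    (∀ (i : ℕ) (hi : i ≤ d), IsFGProjOp (T.obj' i (by omega))) ∧
    T.Exact ∧ Mono (T.map' 0 1 (by omega) (by omega)) ∧
    Epi (T.map' d (d+1) (by omega) (by omega))

variable (C)

/-- `gldim (mod C) ≤ d`. -/
def GldimLE (d : ℕ) : Prop :=
  ∀ F : AmbC C, IsFinitelyPresented F → PdimLE F d

/-- `gldim (mod Cᵒᵖ) ≤ d`. -/
def GldimOpLE (d : ℕ) : Prop :=
  ∀ G : AmbOp C, IsFinitelyPresentedOp G → PdimOpLE G d

variable {C}

/-- `G ∈ mod Cᵒᵖ` is a transpose of `F ∈ mod C`: for some morphism `f : X ⟶ Y` of `C`,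
`F` is the cokernel of `C(-,f)` and `G` is the cokernel of `C(f,-)`. -/
def IsTransposeOf (G : AmbOp C) (F : AmbC C) : Prop :=
  ∃ (X Y : C) (f : X ⟶ Y) (p : preadditiveYoneda.obj Y ⟶ F)
    (q : preadditiveCoyoneda.obj (op X) ⟶ G),
      IsCokernelπ (preadditiveYoneda.map f) p ∧
      IsCokernelπ (preadditiveCoyoneda.map f.op) q

/-- A partial projective resolution `P_{m} → ⋯ → P_0 → G` in `mod Cᵒᵖ`. -/
def IsPartialProjResolutionOp {m : ℕ} (R : ComposableArrows (AmbOp C) (m+1))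
    (G : AmbOp C) : Prop :=
  R.obj' (m+1) (by omega) = G ∧
  (∀ (j : ℕ) (hj : j ≤ m), IsFGProjOp (R.obj' j (by omega))) ∧
  R.Exact ∧ Epi (R.map' m (m+1) (by omega) (by omega))

/-- A partial projective resolution `P_{m} → ⋯ → P_0 → F` in `mod C`. -/
def IsPartialProjResolutionC {m : ℕ} (R : ComposableArrows (AmbC C) (m+1))
    (F : AmbC C) : Prop :=
  R.obj' (m+1) (by omega) = F ∧
  (∀ (j : ℕ) (hj : j ≤ m), IsFGProj (R.obj' j (by omega))) ∧
  R.Exact ∧ Epi (R.map' m (m+1) (by omega) (by omega))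

/-- `F ∈ mod C` is `k`-torsion free: `Ext^i(Tr F, C(X,-)) = 0` for all `1 ≤ i ≤ k` and
all `X ∈ C`, the `Ext` groups being computed from a projective resolution of a transpose
`Tr F` in `mod Cᵒᵖ`. -/
def IsTorsionFree (F : AmbC C) (k : ℕ) : Prop :=
  ∃ G : AmbOp C, IsTransposeOf G F ∧
    ∀ i : ℕ, 1 ≤ i → i ≤ k →
      ∃ R : ComposableArrows (AmbOp C) (i+2), IsPartialProjResolutionOp R G ∧
        ∀ X : C, ExtVanishesAt (R.map' 0 1 (by omega) (by omega))
          (R.map' 1 2 (by omega) (by omega)) (preadditiveCoyoneda.obj (op X))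

/-- `G ∈ mod Cᵒᵖ` is `k`-torsion free: `Ext^i(Tr G, C(-,X)) = 0` for all `1 ≤ i ≤ k` and
all `X ∈ C`. -/
def IsTorsionFreeOp (G : AmbOp C) (k : ℕ) : Prop :=
  ∃ F : AmbC C, IsTransposeOf G F ∧
    ∀ i : ℕ, 1 ≤ i → i ≤ k →
      ∃ R : ComposableArrows (AmbC C) (i+2), IsPartialProjResolutionC R F ∧
        ∀ X : C, ExtVanishesAt (R.map' 0 1 (by omega) (by omega))
          (R.map' 1 2 (by omega) (by omega)) (preadditiveYoneda.obj X)

end Paper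

open Paper

/-!
Inside the abelian category of additive functors `Cᵒᵖ ⥤ Ab`, the finitely presented functors
contain the representables, which are projective by Yoneda, and are closed under cokernels and
finite biproducts: a map `F ⟶ G` of presented functors lifts to `a : Y₁ ⟶ Y₂` between the
representing objects, and `coker (F ⟶ G)` is presented by `[f₂, a] : X₂ ⊞ Y₁ ⟶ Y₂`. Weak kernels
give weak pullbacks, and two of them present `ker (F ⟶ G)`; so `mod C` is an abelian full
subcategory. Conversely, if `mod C` is abelian, a representable `C(-,X)` covering the kernel of
`C(-,g)` in `mod C` is `C(-,f)` for a weak kernel `f : X ⟶ Y` of `g`.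
-/

namespace Paper

section CokernelPi

variable {D : Type*} [Category D]

lemma isCokernelπ_iff_isColimit [HasZeroMorphisms D] {A B Q : D} (d : A ⟶ B) (p : B ⟶ Q) :
    IsCokernelπ d p ↔ ∃ w : d ≫ p = 0, Nonempty (IsColimit (CokernelCofork.ofπ p w)) := by
  refine ⟨fun ⟨w, h⟩ => ⟨w, ⟨CokernelCofork.IsColimit.ofπ _ _ (fun q hq => (h q hq).choose)
    (fun q hq => (h q hq).choose_spec.1) (fun q hq m hm => (h q hq).choose_spec.2 m hm)⟩⟩,
    fun ⟨w, ⟨hc⟩⟩ => ⟨w, fun T q hq => ?_⟩⟩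
  exact ⟨hc.desc (CokernelCofork.ofπ q hq), hc.fac _ WalkingParallelPair.one,
    fun t ht => Cofork.IsColimit.hom_ext hc
      (ht.trans (hc.fac (CokernelCofork.ofπ q hq) WalkingParallelPair.one).symm)⟩

lemma IsCokernelπ.comp_iso [HasZeroMorphisms D] {A B Q Q' : D} {d : A ⟶ B} {p : B ⟶ Q}
    (h : IsCokernelπ d p) (e : Q ≅ Q') : IsCokernelπ d (p ≫ e.hom) := by
  refine ⟨by rw [← Category.assoc, h.1, zero_comp], fun T q hq => ?_⟩
  obtain ⟨t, ht, hu⟩ := h.2 q hq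
  exact ⟨e.inv ≫ t, by simpa using ht,
    fun t' ht' => (Iso.eq_inv_comp e).2 (hu _ (by simpa using ht'))⟩

lemma IsCokernelπ.biprod_map [Preadditive D] [HasBinaryBiproducts D] {A₁ B₁ Q₁ A₂ B₂ Q₂ : D}
    {d₁ : A₁ ⟶ B₁} {p₁ : B₁ ⟶ Q₁} {d₂ : A₂ ⟶ B₂} {p₂ : B₂ ⟶ Q₂}
    (h₁ : IsCokernelπ d₁ p₁) (h₂ : IsCokernelπ d₂ p₂) :
    IsCokernelπ (biprod.map d₁ d₂) (biprod.map p₁ p₂) := by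
  refine ⟨biprod.hom_ext' _ _ (by simp [reassoc_of% h₁.1]) (by simp [reassoc_of% h₂.1]),
    fun T q hq => ?_⟩
  have hq₁ : d₁ ≫ biprod.inl ≫ q = 0 := by simpa using biprod.inl ≫= hq
  have hq₂ : d₂ ≫ biprod.inr ≫ q = 0 := by simpa using biprod.inr ≫= hq
  obtain ⟨t₁, ht₁, hu₁⟩ := h₁.2 _ hq₁
  obtain ⟨t₂, ht₂, hu₂⟩ := h₂.2 _ hq₂
  refine ⟨biprod.desc t₁ t₂, biprod.hom_ext' _ _ (by simp [ht₁]) (by simp [ht₂]),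
    fun t ht => biprod.hom_ext' _ _ ?_ ?_⟩
  · simpa using hu₁ _ (by simpa using biprod.inl ≫= ht)
  · simpa using hu₂ _ (by simpa using biprod.inr ≫= ht)

end CokernelPi

section Pointwise

lemma isColimit_cokernelCofork_iff_exact {A B : AddCommGrpCat.{u}} {f : A ⟶ B}
    (c : CokernelCofork f) :
    Nonempty (IsColimit c) ↔ Function.Exact f c.π ∧ Function.Surjective c.π := by
  rw [← ShortComplex.ab_exact_iff_function_exact (ShortComplex.mk f c.π c.condition),
    ← AddCommGrpCat.epi_iff_surjective, ShortComplex.exact_and_epi_g_iff_g_is_cokernel]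
  exact ⟨fun ⟨h⟩ => ⟨h.ofIsoColimit (Cofork.isoCoforkOfπ c)⟩,
    fun ⟨h⟩ => ⟨h.ofIsoColimit (Cofork.isoCoforkOfπ c).symm⟩⟩

lemma isLimit_kernelFork_iff_exact {A B : AddCommGrpCat.{u}} {f : A ⟶ B} (c : KernelFork f) :
    Nonempty (IsLimit c) ↔ Function.Exact c.ι f ∧ Function.Injective c.ι := by
  rw [← ShortComplex.ab_exact_iff_function_exact (ShortComplex.mk c.ι f c.condition),
    ← AddCommGrpCat.mono_iff_injective, ShortComplex.exact_and_mono_f_iff_f_is_kernel]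
  exact ⟨fun ⟨h⟩ => ⟨h.ofIsoLimit (Fork.isoForkOfι c)⟩,
    fun ⟨h⟩ => ⟨h.ofIsoLimit (Fork.isoForkOfι c).symm⟩⟩

variable {J : Type*} [Category J]

lemma isColimit_cokernelCofork_iff_app {F G : J ⥤ AddCommGrpCat.{u}} {d : F ⟶ G}
    (c : CokernelCofork d) : Nonempty (IsColimit c) ↔
      ∀ j, Function.Exact (d.app j) (c.π.app j) ∧ Function.Surjective (c.π.app j) :=
  ⟨fun ⟨h⟩ j => (isColimit_cokernelCofork_iff_exact (c.map ((evaluation J _).obj j))).1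
      ⟨c.mapIsColimit h _⟩,
    fun h => ⟨evaluationJointlyReflectsColimits c fun j => (c.isColimitMapCoconeEquiv _).symm
      ((isColimit_cokernelCofork_iff_exact (c.map ((evaluation J _).obj j))).2 (h j)).some⟩⟩

lemma isLimit_kernelFork_iff_app {F G : J ⥤ AddCommGrpCat.{u}} {d : F ⟶ G}
    (c : KernelFork d) : Nonempty (IsLimit c) ↔
      ∀ j, Function.Exact (c.ι.app j) (d.app j) ∧ Function.Injective (c.ι.app j) :=
  ⟨fun ⟨h⟩ j => (isLimit_kernelFork_iff_exact (c.map ((evaluation J _).obj j))).1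
      ⟨c.mapIsLimit h _⟩,
    fun h => ⟨evaluationJointlyReflectsLimits c fun j => (c.isLimitMapConeEquiv _).symm
      ((isLimit_kernelFork_iff_exact (c.map ((evaluation J _).obj j))).2 (h j)).some⟩⟩

lemma isCokernelπ_iff_app {F G H : J ⥤ AddCommGrpCat.{u}} (d : F ⟶ G) (p : G ⟶ H) :
    IsCokernelπ d p ↔ ∀ j, Function.Exact (d.app j) (p.app j) ∧ Function.Surjective (p.app j) := by
  rw [isCokernelπ_iff_isColimit]
  refine ⟨fun ⟨_, h⟩ => (isColimit_cokernelCofork_iff_app _).1 h, fun h => ?_⟩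
  have w : d ≫ p = 0 := by
    ext j x
    exact (h j).1.apply_apply_eq_zero x
  exact ⟨w, (isColimit_cokernelCofork_iff_app (CokernelCofork.ofπ p w)).2 h⟩

end Pointwise

section Yoneda

variable {C : Type u} [Category.{u} C] [Preadditive C]

instance : (preadditiveYoneda : C ⥤ AmbC C).Additive where
  map_add := by intros; ext; exact Preadditive.comp_add _ _ _ _ _ _

lemma preadditiveYoneda_obj_hom_app_eq_map {Y W : C} {F : AmbC C} (α : preadditiveYoneda.obj Y ⟶ F) (g : W ⟶ Y) :
    α.app (op W) g = F.map g.op (α.app (op Y) (𝟙 Y)) := by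
  change _ = (α.app (op Y) ≫ F.map g.op) (𝟙 Y)
  rw [← α.naturality]
  change _ = α.app (op W) (g ≫ 𝟙 Y)
  rw [Category.comp_id]

lemma preadditiveYoneda_obj_hom_ext {Y : C} {F : AmbC C} {α β : preadditiveYoneda.obj Y ⟶ F}
    (h : α.app (op Y) (𝟙 Y) = β.app (op Y) (𝟙 Y)) : α = β := by
  ext ⟨W⟩ g
  exact (preadditiveYoneda_obj_hom_app_eq_map α g).trans ((congrArg _ h).trans (preadditiveYoneda_obj_hom_app_eq_map β g).symm)

lemma exists_preadditiveYoneda_map_comp_eq {Y₁ Y₂ : C} {F : AmbC C}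
    (p : preadditiveYoneda.obj Y₂ ⟶ F) (hp : Function.Surjective (p.app (op Y₁)))
    (α : preadditiveYoneda.obj Y₁ ⟶ F) : ∃ a : Y₁ ⟶ Y₂, preadditiveYoneda.map a ≫ p = α := by
  obtain ⟨a, ha⟩ : ∃ a : Y₁ ⟶ Y₂, p.app _ a = α.app (op Y₁) (𝟙 Y₁) := hp _
  refine ⟨a, preadditiveYoneda_obj_hom_ext ?_⟩
  change p.app _ (𝟙 Y₁ ≫ a) = _
  rw [Category.id_comp, ha]

-- `map_add` and `map_sub` with the elements typed as morphisms of `C`, so that they rewrite.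
lemma preadditiveYoneda_obj_hom_app_add {Y W : C} {F : AmbC C}
    (p : preadditiveYoneda.obj Y ⟶ F) (g g' : W ⟶ Y) :
    p.app (op W) (g + g') = p.app (op W) g + p.app (op W) g' :=
  map_add _ _ _

lemma preadditiveYoneda_obj_hom_app_sub {Y W : C} {F : AmbC C}
    (p : preadditiveYoneda.obj Y ⟶ F) (g g' : W ⟶ Y) :
    p.app (op W) (g - g') = p.app (op W) g - p.app (op W) g' :=
  map_sub _ _ _

lemma isFinitelyPresented_iff_app (F : AmbC C) : IsFinitelyPresented F ↔
    ∃ (X Y : C) (f : X ⟶ Y) (p : preadditiveYoneda.obj Y ⟶ F), ∀ W : C,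
      (∀ g : W ⟶ Y, p.app (op W) g = 0 ↔ ∃ h : W ⟶ X, h ≫ f = g) ∧
        ∀ x : F.obj (op W), ∃ g : W ⟶ Y, p.app (op W) g = x := by
  simp only [IsFinitelyPresented, isCokernelπ_iff_app]
  exact exists₄_congr fun X Y f p => ⟨fun h W => h (op W), fun h W => h W.unop⟩

lemma isFinitelyPresented_preadditiveYoneda_obj (Y : C) :
    IsFinitelyPresented (preadditiveYoneda.obj Y) :=
  ⟨Y, Y, 0, 𝟙 _, by simp, fun _ q _ => ⟨q, Category.id_comp q, fun t ht => by simpa using ht⟩⟩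

end Yoneda

lemma HasWeakKernelsP.exists_weakPullback {C : Type*} [Category C] [Preadditive C]
    [HasBinaryBiproducts C] (hwk : HasWeakKernelsP C) {A B Z : C} (a : A ⟶ Z) (b : B ⟶ Z) :
    ∃ (P : C) (u : P ⟶ A), ∀ ⦃W : C⦄ (g : W ⟶ A),
      (∃ h : W ⟶ B, h ≫ b = g ≫ a) ↔ ∃ v : W ⟶ P, v ≫ u = g := by
  obtain ⟨P, w, hw, hfac⟩ := hwk (biprod.desc a (-b))
  refine ⟨P, w ≫ biprod.fst, fun W g => ⟨fun ⟨h, hh⟩ => ?_, fun ⟨v, hv⟩ => ?_⟩⟩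
  · obtain ⟨v, hv⟩ := hfac (biprod.lift g h) (by simp [hh])
    exact ⟨v, by simp [reassoc_of% hv]⟩
  · refine ⟨v ≫ w ≫ biprod.snd, ?_⟩
    have := v ≫= hw
    simp only [biprod.desc_eq, Preadditive.comp_add, Preadditive.comp_neg, comp_zero,
      add_neg_eq_zero] at this
    simpa [← hv] using this.symm

section Closure

variable {C : Type u} [Category.{u} C] [Preadditive C]

instance : ObjectProperty.IsClosedUnderIsomorphisms (IsFinitelyPresented (C := C)) where
  of_iso e := fun ⟨X, Y, f, p, hp⟩ => ⟨X, Y, f, p ≫ e.hom, hp.comp_iso e⟩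

instance [HasZeroObject C] : ObjectProperty.ContainsZero (IsFinitelyPresented (C := C)) :=
  ⟨⟨_, preadditiveYoneda.map_isZero (isZero_zero C), isFinitelyPresented_preadditiveYoneda_obj _⟩⟩

variable [HasBinaryBiproducts C]

instance : ObjectProperty.IsClosedUnderCokernels (IsFinitelyPresented (C := C)) where
  cokernels_le := by
    rintro _ ⟨φ, k, hk, hF, hG⟩
    obtain ⟨X₁, Y₁, f₁, p₁, hp₁⟩ := (isFinitelyPresented_iff_app _).1 hF
    obtain ⟨X₂, Y₂, f₂, p₂, hp₂⟩ := (isFinitelyPresented_iff_app _).1 hG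
    obtain ⟨a, ha⟩ := exists_preadditiveYoneda_map_comp_eq p₂ (hp₂ Y₁).2 (p₁ ≫ φ)
    have ha' {W : C} (c : W ⟶ Y₁) : p₂.app (op W) (c ≫ a) = φ.app (op W) (p₁.app (op W) c) :=
      ConcreteCategory.congr_hom (NatTrans.congr_app ha _) c
    have hk' := (isColimit_cokernelCofork_iff_app k).1 ⟨hk⟩
    refine (isFinitelyPresented_iff_app _).2 ⟨X₂ ⊞ Y₁, Y₂, biprod.desc f₂ a, p₂ ≫ k.π,
      fun W => ⟨fun g => ?_, ((hk' (op W)).2.comp (hp₂ W).2 :)⟩⟩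
    change k.π.app _ (p₂.app _ g) = 0 ↔ _
    rw [(hk' (op W)).1]
    constructor
    · rintro ⟨y, hy⟩
      obtain ⟨c, rfl⟩ := (hp₁ W).2 y
      have : p₂.app (op W) (g - c ≫ a) = 0 := by
        rw [preadditiveYoneda_obj_hom_app_sub, ha', hy, sub_self]
      obtain ⟨h, hh⟩ := ((hp₂ W).1 _).1 this
      exact ⟨biprod.lift h c, by rw [biprod.lift_desc, hh, sub_add_cancel]⟩
    · rintro ⟨m, rfl⟩
      have h0 : p₂.app (op W) ((m ≫ biprod.fst) ≫ f₂) = 0 := ((hp₂ W).1 _).2 ⟨_, rfl⟩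
      refine ⟨p₁.app _ (m ≫ biprod.snd), ?_⟩
      rw [← ha', biprod.desc_eq, Preadditive.comp_add, ← Category.assoc, ← Category.assoc,
        preadditiveYoneda_obj_hom_app_add, h0, zero_add]

lemma isFinitelyPresented_biprod {F G : AmbC C} (hF : IsFinitelyPresented F)
    (hG : IsFinitelyPresented G) : IsFinitelyPresented (F ⊞ G) := by
  obtain ⟨X₁, Y₁, f₁, p₁, hp₁⟩ := hF
  obtain ⟨X₂, Y₂, f₂, p₂, hp₂⟩ := hG
  have := preservesBinaryBiproducts_of_preservesBiproducts (preadditiveYoneda : C ⥤ AmbC C)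
  have hX := ObjectProperty.prop_of_iso _ (preadditiveYoneda.mapBiprod X₁ X₂)
    (isFinitelyPresented_preadditiveYoneda_obj _)
  have hY := ObjectProperty.prop_of_iso _ (preadditiveYoneda.mapBiprod Y₁ Y₂)
    (isFinitelyPresented_preadditiveYoneda_obj _)
  obtain ⟨_, ⟨hc⟩⟩ := (isCokernelπ_iff_isColimit _ _).1 (hp₁.biprod_map hp₂)
  exact ObjectProperty.prop_of_isColimit_cokernelCofork _ hc hX hY

instance [HasZeroObject C] :
    ObjectProperty.IsClosedUnderFiniteProducts (IsFinitelyPresented (C := C)) :=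
  have : ObjectProperty.IsClosedUnderBinaryProducts (IsFinitelyPresented (C := C)) := ⟨by
    rintro _ ⟨p⟩
    refine ObjectProperty.prop_of_iso _ (IsLimit.conePointUniqueUpToIso (prodIsProd _ _)
      ((IsLimit.postcomposeHomEquiv (diagramIsoPair p.diag) _).2 p.isLimit)) ?_
    exact ObjectProperty.prop_of_iso _ (biprod.isoProd _ _)
      (isFinitelyPresented_biprod (p.prop_diag_obj _) (p.prop_diag_obj _))⟩
  .mk'

lemma HasWeakKernelsP.isClosedUnderKernels (hwk : HasWeakKernelsP C) :
    ObjectProperty.IsClosedUnderKernels (IsFinitelyPresented (C := C)) where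
  kernels_le := by
    rintro _ ⟨φ, k, hk, hF, hG⟩
    obtain ⟨X₁, Y₁, f₁, p₁, hp₁⟩ := (isFinitelyPresented_iff_app _).1 hF
    obtain ⟨X₂, Y₂, f₂, p₂, hp₂⟩ := (isFinitelyPresented_iff_app _).1 hG
    obtain ⟨a, ha⟩ := exists_preadditiveYoneda_map_comp_eq p₂ (hp₂ Y₁).2 (p₁ ≫ φ)
    have ha' {W : C} (c : W ⟶ Y₁) : p₂.app (op W) (c ≫ a) = φ.app (op W) (p₁.app (op W) c) :=
      ConcreteCategory.congr_hom (NatTrans.congr_app ha _) c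
    have hk' := (isLimit_kernelFork_iff_app k).1 ⟨hk⟩
    -- `C(-,u)` maps onto the preimage of `ker φ` under `p₁`, and `C(-,u')` onto the kernel of that.
    obtain ⟨P, u, hu⟩ := hwk.exists_weakPullback a f₂
    obtain ⟨P', u', hu'⟩ := hwk.exists_weakPullback u f₁
    have key {W : C} (g : W ⟶ Y₁) :
        φ.app (op W) (p₁.app (op W) g) = 0 ↔ ∃ v : W ⟶ P, v ≫ u = g := by
      rw [← ha', (hp₂ W).1, ← hu]
    obtain ⟨μ, hμ⟩ := KernelFork.IsLimit.lift' hk (preadditiveYoneda.map u ≫ p₁) (by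
      ext ⟨W⟩ v
      exact (key _).2 ⟨v, rfl⟩)
    have hμ' {W : C} (v : W ⟶ P) : k.ι.app (op W) (μ.app (op W) v) = p₁.app (op W) (v ≫ u) :=
      ConcreteCategory.congr_hom (NatTrans.congr_app hμ _) v
    refine (isFinitelyPresented_iff_app _).2 ⟨P', P, u', μ, fun W => ⟨fun v => ?_, fun x => ?_⟩⟩
    · rw [← (injective_iff_map_eq_zero' _).1 (hk' (op W)).2, hμ', (hp₁ W).1, hu']
    · obtain ⟨g, hg⟩ := (hp₁ W).2 (k.ι.app _ x)
      obtain ⟨v, rfl⟩ := (key g).1 (by rw [hg]; exact (hk' (op W)).1.apply_apply_eq_zero x)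
      exact ⟨v, (hk' (op W)).2 ((hμ' v).trans hg)⟩

end Closure

variable {C : Type u} [Category.{u} C] [Preadditive C]

instance : Preadditive (ModC C) :=
  inferInstanceAs (Preadditive (ObjectProperty.FullSubcategory (IsFinitelyPresented (C := C))))

noncomputable abbrev HasWeakKernelsP.abelianModC [HasZeroObject C] [HasBinaryBiproducts C]
    (hwk : HasWeakKernelsP C) : Abelian (ModC C) :=
  have := hwk.isClosedUnderKernels
  inferInstanceAs (Abelian (ObjectProperty.FullSubcategory (IsFinitelyPresented (C := C))))

lemma hasWeakKernelsP_of_hasKernels [HasKernels (ModC C)] : HasWeakKernelsP C := by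
  intro Y Z g
  let y (X : C) : ModC C := ⟨preadditiveYoneda.obj X, isFinitelyPresented_preadditiveYoneda_obj X⟩
  let gm : y Y ⟶ y Z := ObjectProperty.homMk (preadditiveYoneda.map g)
  obtain ⟨X, X', f', p, hp⟩ := (isFinitelyPresented_iff_app _).1 (kernel gm).property
  obtain ⟨f, hf⟩ := preadditiveYoneda.map_surjective (p ≫ (kernel.ι gm).hom)
  refine ⟨X', f, preadditiveYoneda.map_injective ?_, fun W u hu => ?_⟩
  · have hι : (kernel.ι gm).hom ≫ preadditiveYoneda.map g = 0 :=
      congrArg InducedCategory.Hom.hom (kernel.condition gm)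
    rw [Functor.map_comp, hf, Functor.map_zero, Category.assoc, hι, comp_zero]
  · let um : y W ⟶ y Y := ObjectProperty.homMk (preadditiveYoneda.map u)
    have hum : um ≫ gm = 0 := ObjectProperty.hom_ext _ (by
      change preadditiveYoneda.map u ≫ preadditiveYoneda.map g = 0
      rw [← Functor.map_comp, hu, Functor.map_zero])
    obtain ⟨v, hv⟩ := (hp W).2 ((kernel.lift gm um hum).hom.app (op W) (𝟙 W))
    refine ⟨v, ?_⟩
    have e : (preadditiveYoneda.map f).app (op W) v =
        (kernel.lift gm um hum ≫ kernel.ι gm).hom.app (op W) (𝟙 W) := by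
      rw [hf]
      change (kernel.ι gm).hom.app (op W) (p.app (op W) v) = _
      rw [hv]
      rfl
    rw [kernel.lift_ι] at e
    exact e.trans (Category.id_comp u)

end Paper

theorem stmt_6_general {C : Type u} [Category.{u} C] [Preadditive C]
    [HasFiniteBiproducts C] :
    HasWeakKernelsP C ↔ Nonempty (Abelian (ModC C)) := by
  have : HasBinaryBiproducts C := hasBinaryBiproducts_of_finite_biproducts C
  refine ⟨fun hwk => ⟨hwk.abelianModC⟩, fun ⟨hab⟩ => ?_⟩
  -- Zero morphisms are unique, so `hab` has kernels for the canonical zero morphisms of `mod C`.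
  exact @hasWeakKernelsP_of_hasKernels C _ _
    (by convert hab.has_kernels using 1; exact Subsingleton.elim _ _)

/-- An additive idempotent complete category `C` has weak kernels if and only if the
category `mod C` of finitely presented contravariant additive functors is abelian. -/
theorem stmt_6 {C : Type u} [Category.{u} C] [Preadditive C] [HasZeroObject C]
    [HasFiniteBiproducts C] [IsIdempotentComplete C] :
    HasWeakKernelsP C ↔ Nonempty (Abelian (ModC C)) :=
  stmt_6_general
end
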